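/- arXiv:2602.15581 — 2 statements merged into one kernel-verified Lean document; each statement's English description precedes it below -/
import Mathlib

section
/- Let X₁, X₂ be i.i.d. Uniform[θ−5, θ+5], d = |X₁ − X₂|, and define I^UMP = [min(X₁,X₂), max(X₁,X₂)] if d < 5 and I^UMP = [max(X₁,X₂) − 5, min(X₁,X₂) + 5] if d ≥ 5. Then P(θ ∈ I^UMP) = 1/2 for every θ. -/
open MeasureTheory
open scoped ENNReal

/-- For X₁, X₂ i.i.d. Uniform[θ−5, θ+5], the UMP interval (order-statistic interval if
|X₁−X₂| < 5, complementary interval [max−5, min+5] if |X₁−X₂| ≥ 5) covers θ with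
probability 1/2. -/
theorem ump_interval_coverage (θ : ℝ) :
    (((10 : ℝ≥0∞)⁻¹ • volume.restrict (Set.Icc (θ - 5) (θ + 5))).prod
        ((10 : ℝ≥0∞)⁻¹ • volume.restrict (Set.Icc (θ - 5) (θ + 5))))
      {p : ℝ × ℝ |
        if |p.1 - p.2| < 5 then min p.1 p.2 ≤ θ ∧ θ ≤ max p.1 p.2
        else max p.1 p.2 - 5 ≤ θ ∧ θ ≤ min p.1 p.2 + 5} = 1/2 := by
  set I := Set.Icc (θ - 5) (θ + 5) with hI
  set S : Set (ℝ × ℝ) := {p : ℝ × ℝ |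
        if |p.1 - p.2| < 5 then min p.1 p.2 ≤ θ ∧ θ ≤ max p.1 p.2
        else max p.1 p.2 - 5 ≤ θ ∧ θ ≤ min p.1 p.2 + 5} with hS
  have hSm : MeasurableSet S := by
    have hEq : S = ({p : ℝ × ℝ | |p.1 - p.2| < 5} ∩ {p | min p.1 p.2 ≤ θ ∧ θ ≤ max p.1 p.2})
        ∪ ({p : ℝ × ℝ | |p.1 - p.2| < 5}ᶜ ∩ {p | max p.1 p.2 - 5 ≤ θ ∧ θ ≤ min p.1 p.2 + 5}) := by
      ext p; by_cases h : |p.1 - p.2| < 5 <;> simp [hS, h]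
    rw [hEq]
    have hmin : Measurable fun p : ℝ × ℝ => min p.1 p.2 := measurable_fst.min measurable_snd
    have hmax : Measurable fun p : ℝ × ℝ => max p.1 p.2 := measurable_fst.max measurable_snd
    have h1 : MeasurableSet {p : ℝ × ℝ | |p.1 - p.2| < 5} :=
      measurableSet_lt (measurable_fst.sub measurable_snd).abs measurable_const
    have h2 : MeasurableSet {p : ℝ × ℝ | min p.1 p.2 ≤ θ ∧ θ ≤ max p.1 p.2} :=
      (measurableSet_le hmin measurable_const).inter
        (measurableSet_le measurable_const hmax)
    have h3 : MeasurableSet {p : ℝ × ℝ | max p.1 p.2 - 5 ≤ θ ∧ θ ≤ min p.1 p.2 + 5} :=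
      (measurableSet_le (hmax.sub measurable_const) measurable_const).inter
        (measurableSet_le measurable_const (hmin.add measurable_const))
    exact (h1.inter h2).union (h1.compl.inter h3)
  rw [Measure.prod_apply hSm, lintegral_smul_measure]
  have hsec : ∀ x ∈ I, x ≠ θ →
      ((10 : ℝ≥0∞)⁻¹ • volume.restrict I) (Prod.mk x ⁻¹' S) = 1/2 := by
    intro x hx hxθ
    have hx1 : θ - 5 ≤ x := hx.1
    have hx2 : x ≤ θ + 5 := hx.2
    have key : Prod.mk x ⁻¹' S ∩ I = if x < θ then Set.Icc θ (θ+5) else Set.Icc (θ-5) θ := by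
      rcases lt_or_gt_of_ne hxθ with hlt | hgt
      · rw [if_pos hlt]
        ext y
        simp only [Set.mem_inter_iff, Set.mem_preimage, Set.mem_setOf_eq, hS, hI,
          Set.mem_Icc, abs_sub_lt_iff, min_def, max_def]
        constructor
        · rintro ⟨h, hy1, hy2⟩
          split_ifs at h with h5 h6 h6 <;>
            first
              | exact ⟨by linarith [h.1, h.2], by linarith [h.1, h.2]⟩
              | (rcases not_and_or.mp h5 with h5 | h5 <;> push_neg at h5 <;>
                  exact ⟨by linarith [h.1, h.2], by linarith [h.1, h.2]⟩)
        · rintro ⟨hy1, hy2⟩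
          refine ⟨?_, by linarith, by linarith⟩
          split_ifs with h5 h6 h6 <;>
            first
              | exact ⟨by linarith, by linarith⟩
              | (rcases not_and_or.mp h5 with h5 | h5 <;> push_neg at h5 <;>
                  exact ⟨by linarith, by linarith⟩)
      · rw [if_neg (not_lt.mpr hgt.le)]
        ext y
        simp only [Set.mem_inter_iff, Set.mem_preimage, Set.mem_setOf_eq, hS, hI,
          Set.mem_Icc, abs_sub_lt_iff, min_def, max_def]
        constructor
        · rintro ⟨h, hy1, hy2⟩
          split_ifs at h with h5 h6 h6 <;>
            first
              | exact ⟨by linarith [h.1, h.2], by linarith [h.1, h.2]⟩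
              | (rcases not_and_or.mp h5 with h5 | h5 <;> push_neg at h5 <;>
                  exact ⟨by linarith [h.1, h.2], by linarith [h.1, h.2]⟩)
        · rintro ⟨hy1, hy2⟩
          refine ⟨?_, by linarith, by linarith⟩
          split_ifs with h5 h6 h6 <;>
            first
              | exact ⟨by linarith, by linarith⟩
              | (rcases not_and_or.mp h5 with h5 | h5 <;> push_neg at h5 <;>
                  exact ⟨by linarith, by linarith⟩)
    have hres : ((10 : ℝ≥0∞)⁻¹ • volume.restrict I) (Prod.mk x ⁻¹' S)
        = (10 : ℝ≥0∞)⁻¹ * volume (Prod.mk x ⁻¹' S ∩ I) := by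
      simp [Measure.restrict_apply (measurable_prodMk_left hSm)]
    rw [hres, key]
    have harith : (10 : ℝ≥0∞)⁻¹ * 5 = 2⁻¹ := by
      have : (10 : ℝ≥0∞) = 5 * 2 := by norm_num
      rw [this, ENNReal.mul_inv (Or.inl (by norm_num)) (Or.inl (by norm_num)),
        mul_comm ((5:ℝ≥0∞))⁻¹, mul_assoc, ENNReal.inv_mul_cancel (by norm_num) (by norm_num),
        mul_one]
    split_ifs <;> · rw [Real.volume_Icc]; norm_num [harith]
  have haeneq : ∀ᵐ x ∂(volume.restrict I), x ≠ θ := by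
    rw [ae_iff]
    have hsub : {x : ℝ | ¬ x ≠ θ} = {θ} := by ext x; simp
    rw [hsub]
    exact le_antisymm ((Measure.restrict_apply_le _ _).trans (by simp)) zero_le
  have hae : ∀ᵐ x ∂(volume.restrict I),
      ((10 : ℝ≥0∞)⁻¹ • volume.restrict I) (Prod.mk x ⁻¹' S) = 1/2 := by
    filter_upwards [ae_restrict_mem measurableSet_Icc, haeneq] with x hxI hxne
    exact hsec x hxI hxne
  rw [lintegral_congr_ae hae, lintegral_const, Measure.restrict_apply MeasurableSet.univ,
    Set.univ_inter, hI, Real.volume_Icc]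
  have h10 : ENNReal.ofReal (θ + 5 - (θ - 5)) = 10 := by norm_num
  rw [h10]
  rw [one_div, mul_comm ((2:ℝ≥0∞))⁻¹, smul_eq_mul, ← mul_assoc,
    ENNReal.inv_mul_cancel (by norm_num) (by norm_num), one_mul]
end

section
/- With X₁, X₂ i.i.d. Uniform[θ−5, θ+5] and d = |X₁−X₂|, the NP interval [min, max] covers θ if and only if the UMP interval covers θ; i.e., the two coverage events are almost surely equal. -/
open MeasureTheory
open scoped ENNReal

/-- For X₁, X₂ i.i.d. Uniform[θ−5, θ+5], the NP interval [min, max] covers θ if and only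
if the UMP interval covers θ, almost surely. -/
theorem np_ump_coverage_ae_equal (θ : ℝ) :
    ∀ᵐ p : ℝ × ℝ ∂(((10 : ℝ≥0∞)⁻¹ • volume.restrict (Set.Icc (θ - 5) (θ + 5))).prod
        ((10 : ℝ≥0∞)⁻¹ • volume.restrict (Set.Icc (θ - 5) (θ + 5)))),
      ((min p.1 p.2 ≤ θ ∧ θ ≤ max p.1 p.2) ↔
        (if |p.1 - p.2| < 5 then min p.1 p.2 ≤ θ ∧ θ ≤ max p.1 p.2
         else max p.1 p.2 - 5 ≤ θ ∧ θ ≤ min p.1 p.2 + 5)) := by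
  set I := Set.Icc (θ - 5) (θ + 5) with hI
  set μ := ((10 : ℝ≥0∞)⁻¹ • volume.restrict I) with hμdef
  have hμc : μ Iᶜ = 0 := by
    simp [hμdef, Measure.restrict_apply (MeasurableSet.compl (s := I) measurableSet_Icc)]
  have hmem : ∀ᵐ p : ℝ × ℝ ∂ μ.prod μ, p ∈ I ×ˢ I := by
    rw [ae_iff]
    have hset : {a : ℝ × ℝ | ¬ a ∈ I ×ˢ I} = Iᶜ ×ˢ Set.univ ∪ Set.univ ×ˢ Iᶜ := by
      rw [← Set.compl_prod_eq_union]; rfl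
    rw [hset]
    refine measure_union_null ?_ ?_
    · rw [Measure.prod_prod, hμc, zero_mul]
    · rw [Measure.prod_prod, hμc, mul_zero]
  filter_upwards [hmem] with p hp
  obtain ⟨⟨h1l, h1r⟩, h2l, h2r⟩ := hp
  split_ifs with h
  · rfl
  · push_neg at h
    constructor
    · rintro ⟨-, -⟩
      constructor
      · have := max_le h1r h2r
        linarith
      · have := le_min h1l h2l
        linarith
    · rintro ⟨-, -⟩
      rcases le_abs.mp h with h' | h'
      · exact ⟨le_trans (min_le_right _ _) (by linarith), le_trans (by linarith) (le_max_left _ _)⟩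
      · exact ⟨le_trans (min_le_left _ _) (by linarith), le_trans (by linarith) (le_max_right _ _)⟩
end
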